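/- arXiv:2602.12163 — 2 statements merged into one kernel-verified Lean document; each statement's English description precedes it below -/
import Mathlib

section
/- Let λ > 0, f_λ(x) = x·e^{λx²} on [0,∞), and Φ(y) = y·f_λ^{-1}(y). Then Φ is strictly convex on (0,∞). -/
/-!
Write `x = g y`. Differentiating `y = x e^{λx²}` gives `g'(y) = x / (y (1 + 2λx²))`, hence
`Φ'(y) = x + x / (1 + 2λx²)`. This is a strictly increasing function of `x`, and `x = g y` is
strictly increasing in `y`, so `Φ'` is strictly increasing on `(0, ∞)`.
-/

open Real Set Topology

lemma MonotoneOn.hasDerivAt_of_local_left_inverse {f g : ℝ → ℝ} {s : Set ℝ} {a f' : ℝ}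
    (hg : MonotoneOn g s) (hs : s ∈ 𝓝 a) (hgs : g '' s ∈ 𝓝 (g a))
    (hfg : ∀ y ∈ s, f (g y) = y) (hf : HasDerivAt f f' (g a)) (hf' : f' ≠ 0) :
    HasDerivAt g f'⁻¹ a :=
  hf.of_local_left_inverse (continuousAt_of_monotoneOn_of_image_mem_nhds hg hs hgs) hf'
    (Filter.eventually_of_mem hs hfg)

lemma hasDerivAt_mul_exp_mul_sq (l x : ℝ) :
    HasDerivAt (fun x : ℝ => x * exp (l * x ^ 2)) (exp (l * x ^ 2) * (1 + 2 * l * x ^ 2)) x :=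
  ((hasDerivAt_id' x).mul ((hasDerivAt_pow 2 x).const_mul l).exp).congr_deriv (by
    push_cast
    ring)

lemma strictMono_mul_exp_mul_sq {l : ℝ} (hl : 0 ≤ l) :
    StrictMono fun x : ℝ => x * exp (l * x ^ 2) :=
  strictMono_of_deriv_pos fun x => by
    rw [(hasDerivAt_mul_exp_mul_sq l x).deriv]
    positivity

lemma strictMono_add_div_one_add_mul_sq {l : ℝ} (hl : 0 ≤ l) :
    StrictMono fun x : ℝ => x + x / (1 + 2 * l * x ^ 2) := by
  intro a b hab
  have ha : 0 < 1 + 2 * l * a ^ 2 := by positivity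
  have hb : 0 < 1 + 2 * l * b ^ 2 := by positivity
  have hdiff : (b + b / (1 + 2 * l * b ^ 2)) - (a + a / (1 + 2 * l * a ^ 2)) =
      (b - a) * (2 + 2 * l * (a ^ 2 - a * b + b ^ 2) + 4 * l ^ 2 * a ^ 2 * b ^ 2) /
        ((1 + 2 * l * a ^ 2) * (1 + 2 * l * b ^ 2)) := by
    field_simp
    ring
  have hquad : 0 ≤ l * (a ^ 2 - a * b + b ^ 2) :=
    mul_nonneg hl (by nlinarith [sq_nonneg (a - b), sq_nonneg (a + b)])
  have hprod : 0 ≤ 4 * l ^ 2 * a ^ 2 * b ^ 2 := by positivity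
  rw [← sub_pos, hdiff]
  exact div_pos (mul_pos (sub_pos.2 hab) (by linarith)) (mul_pos ha hb)

section RightInverse

variable {l : ℝ} {g : ℝ → ℝ}

lemma pos_of_mul_exp_mul_sq_eq (hg : ∀ y, 0 ≤ y → g y * exp (l * g y ^ 2) = y) {y : ℝ}
    (hy : 0 < y) : 0 < g y :=
  (mul_pos_iff_of_pos_right (exp_pos _)).1 (by rwa [hg y hy.le])

lemma strictMonoOn_of_mul_exp_mul_sq_eq (hl : 0 ≤ l)
    (hg : ∀ y, 0 ≤ y → g y * exp (l * g y ^ 2) = y) : StrictMonoOn g (Ici 0) :=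
  fun a ha b hb hab => (strictMono_mul_exp_mul_sq hl).lt_iff_lt.1 <| by
    simp only [hg a ha, hg b hb]
    exact hab

lemma hasDerivAt_of_mul_exp_mul_sq_eq (hl : 0 ≤ l)
    (hg_left : ∀ x, 0 ≤ x → g (x * exp (l * x ^ 2)) = x)
    (hg_right : ∀ y, 0 ≤ y → g y * exp (l * g y ^ 2) = y) {y : ℝ} (hy : 0 < y) :
    HasDerivAt g (exp (l * g y ^ 2) * (1 + 2 * l * g y ^ 2))⁻¹ y := by
  have himage : Ioi 0 ⊆ g '' Ioi 0 := fun x hx =>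
    ⟨x * exp (l * x ^ 2), mul_pos hx (exp_pos _), hg_left x (hx.le)⟩
  refine ((strictMonoOn_of_mul_exp_mul_sq_eq hl hg_right).mono Ioi_subset_Ici_self).monotoneOn
    |>.hasDerivAt_of_local_left_inverse (Ioi_mem_nhds hy)
      (Filter.mem_of_superset (Ioi_mem_nhds (pos_of_mul_exp_mul_sq_eq hg_right hy)) himage)
      (fun y hy => hg_right y (hy.le)) (hasDerivAt_mul_exp_mul_sq l (g y)) ?_
  positivity

lemma hasDerivAt_mul_of_mul_exp_mul_sq_eq (hl : 0 ≤ l)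
    (hg_left : ∀ x, 0 ≤ x → g (x * exp (l * x ^ 2)) = x)
    (hg_right : ∀ y, 0 ≤ y → g y * exp (l * g y ^ 2) = y) {y : ℝ} (hy : 0 < y) :
    HasDerivAt (fun y => y * g y) (g y + g y / (1 + 2 * l * g y ^ 2)) y := by
  refine ((hasDerivAt_id y).mul (hasDerivAt_of_mul_exp_mul_sq_eq hl hg_left hg_right hy))
    |>.congr_deriv ?_
  have hyx := hg_right y hy.le
  set x := g y
  rw [id_eq, ← hyx]
  field_simp

end RightInverse

theorem stmt_4_general (l : ℝ) (hl : 0 < l) (g : ℝ → ℝ)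
    (hg_left : ∀ x : ℝ, 0 ≤ x → g (x * Real.exp (l * x ^ 2)) = x)
    (hg_right : ∀ y : ℝ, 0 ≤ y → g y * Real.exp (l * (g y) ^ 2) = y)
    (Φ : ℝ → ℝ) (hΦ : ∀ y : ℝ, Φ y = y * g y) :
    StrictConvexOn ℝ (Set.Ioi (0 : ℝ)) Φ := by
  obtain rfl : Φ = fun y => y * g y := funext hΦ
  have hderiv (y : ℝ) (hy : y ∈ Ioi (0 : ℝ)) :=
    hasDerivAt_mul_of_mul_exp_mul_sq_eq hl.le hg_left hg_right hy
  refine StrictMonoOn.strictConvexOn_of_deriv (convex_Ioi 0)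
    (continuousOn_of_forall_continuousAt fun y hy => (hderiv y hy).continuousAt) ?_
  rw [interior_Ioi]
  exact (strictMono_add_div_one_add_mul_sq hl.le).comp_strictMonoOn
    ((strictMonoOn_of_mul_exp_mul_sq_eq hl.le hg_right).mono Ioi_subset_Ici_self)
    |>.congr fun y hy => (hderiv y hy).deriv.symm

/-- Let `λ > 0`, `f_λ(x) = x·e^{λx²}` on `[0,∞)`, `g = f_λ⁻¹` its inverse bijection,
and `Φ(y) = y·g(y)`. Then `Φ` is strictly convex on `(0,∞)`. -/
theorem stmt_4 (l : ℝ) (hl : 0 < l) (g : ℝ → ℝ)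
    (hg_left : ∀ x : ℝ, 0 ≤ x → g (x * Real.exp (l * x ^ 2)) = x)
    (hg_right : ∀ y : ℝ, 0 ≤ y → g y * Real.exp (l * (g y) ^ 2) = y)
    (hg_nonneg : ∀ y : ℝ, 0 ≤ y → 0 ≤ g y)
    (Φ : ℝ → ℝ) (hΦ : ∀ y : ℝ, Φ y = y * g y) :
    StrictConvexOn ℝ (Set.Ioi (0 : ℝ)) Φ :=
  stmt_4_general l hl g hg_left hg_right Φ hΦ
end

section
/- Suppose y : [0,∞) → [0,∞) is differentiable with y(0) = 0 and satisfies, for every λ ∈ (0,1), the differential inequality y'(t) ≤ C·h(λ)·f(t)·y(t)^λ, where f ∈ L¹_loc([0,∞)) is nonnegative, C > 0, and h(λ)·(1-λ) → 0 as λ → 1⁻. Then y(t) = 0 for all t ≥ 0. -/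
open Filter Set

/-- Abstract Yudovich uniqueness lemma: if `y : [0,∞) → [0,∞)` is differentiable
with `y(0) = 0` and satisfies, for every `λ ∈ (0,1)`,
`y'(t) ≤ C·h(λ)·f(t)·y(t)^λ`, where `f` is nonnegative and locally integrable on
`[0,∞)`, `C > 0`, and `h(λ)·(1-λ) → 0` as `λ → 1⁻`, then `y ≡ 0`. -/
theorem stmt_7 (y f : ℝ → ℝ) (C : ℝ) (hC : 0 < C) (h : ℝ → ℝ)
    (hy_diff : Differentiable ℝ y)
    (hy_nonneg : ∀ t, 0 ≤ t → 0 ≤ y t)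
    (hy0 : y 0 = 0)
    (hf_nonneg : ∀ t, 0 ≤ t → 0 ≤ f t)
    (hf_loc : ∀ T : ℝ, 0 ≤ T → MeasureTheory.IntegrableOn f (Icc 0 T))
    (hh_pos : ∀ lam ∈ Ioo (0 : ℝ) 1, 0 < h lam)
    (hh : Tendsto (fun lam : ℝ => h lam * (1 - lam)) (nhdsWithin 1 (Iio 1)) (nhds 0))
    (hineq : ∀ lam ∈ Ioo (0 : ℝ) 1, ∀ t, 0 ≤ t →
      deriv y t ≤ C * h lam * f t * (y t) ^ lam) :
    ∀ t, 0 ≤ t → y t = 0 := by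
  intro t ht
  set I : ℝ := ∫ s in (0:ℝ)..t, f s with hI
  have hI0 : 0 ≤ I := intervalIntegral.integral_nonneg ht fun u hu => hf_nonneg u hu.1
  -- key inequality: for each lam ∈ (0,1), y t ^ (1-lam) ≤ C * h lam * (1-lam) * I
  have key : ∀ lam ∈ Ioo (0:ℝ) 1, y t ^ (1 - lam) ≤ C * h lam * (1 - lam) * I := by
    intro lam hlam
    obtain ⟨hl0, hl1⟩ := hlam
    have h1l : 0 < 1 - lam := by linarith
    -- epsilon version
    have eps : ∀ ε : ℝ, 0 < ε →
        (y t + ε) ^ (1 - lam) ≤ ε ^ (1 - lam) + C * h lam * (1 - lam) * I := by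
      intro ε hε
      have hpos : ∀ s, 0 ≤ s → 0 < y s + ε := fun s hs => by
        have := hy_nonneg s hs; linarith
      have hderiv : ∀ s ∈ Ioo 0 t, HasDerivWithinAt (fun s => (y s + ε) ^ (1 - lam))
          (deriv y s * (1 - lam) * (y s + ε) ^ (1 - lam - 1)) (Ioi s) s := by
        intro s hs
        have hy' : HasDerivAt (fun s => y s + ε) (deriv y s) s :=
          (hy_diff s).hasDerivAt.add_const ε
        exact (hy'.rpow_const (Or.inl (ne_of_gt (hpos s hs.1.le)))).hasDerivWithinAt
      have hcont : ContinuousOn (fun s => (y s + ε) ^ (1 - lam)) (Icc 0 t) :=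
        ((hy_diff.continuous.add continuous_const).continuousOn).rpow_const
          (fun x _ => Or.inr h1l.le)
      have φint : MeasureTheory.IntegrableOn (fun s => C * h lam * (1 - lam) * f s) (Icc 0 t) :=
        (hf_loc t ht).const_mul _
      have hbound : ∀ s ∈ Ioo 0 t,
          deriv y s * (1 - lam) * (y s + ε) ^ (1 - lam - 1) ≤ C * h lam * (1 - lam) * f s := by
        intro s hs
        have hs0 : (0:ℝ) ≤ s := hs.1.le
        have hyε : 0 < y s + ε := hpos s hs0
        have hmul : 0 ≤ (1 - lam) * (y s + ε) ^ (1 - lam - 1) := by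
          positivity
        have h1 : deriv y s * ((1 - lam) * (y s + ε) ^ (1 - lam - 1)) ≤
            (C * h lam * f s * y s ^ lam) * ((1 - lam) * (y s + ε) ^ (1 - lam - 1)) :=
          mul_le_mul_of_nonneg_right (hineq lam ⟨hl0, hl1⟩ s hs0) hmul
        have h2 : y s ^ lam * (y s + ε) ^ (1 - lam - 1) ≤ 1 := by
          have hle : y s ^ lam ≤ (y s + ε) ^ lam :=
            Real.rpow_le_rpow (hy_nonneg s hs0) (by linarith) hl0.le
          have hneg : (y s + ε) ^ (1 - lam - 1) = ((y s + ε) ^ lam)⁻¹ := by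
            rw [show (1 - lam - 1 : ℝ) = -lam by ring, Real.rpow_neg hyε.le]
          rw [hneg]
          have hpow : 0 < (y s + ε) ^ lam := Real.rpow_pos_of_pos hyε lam
          rw [← div_eq_mul_inv, div_le_one hpow]
          exact hle
        calc deriv y s * (1 - lam) * (y s + ε) ^ (1 - lam - 1)
            = deriv y s * ((1 - lam) * (y s + ε) ^ (1 - lam - 1)) := by ring
          _ ≤ (C * h lam * f s * y s ^ lam) * ((1 - lam) * (y s + ε) ^ (1 - lam - 1)) := h1
          _ = (C * h lam * (1 - lam) * f s) * (y s ^ lam * (y s + ε) ^ (1 - lam - 1)) := by ring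
          _ ≤ (C * h lam * (1 - lam) * f s) * 1 := by
              apply mul_le_mul_of_nonneg_left h2
              have := hf_nonneg s hs0
              have := (hh_pos lam ⟨hl0, hl1⟩)
              positivity
          _ = C * h lam * (1 - lam) * f s := by ring
      have main := intervalIntegral.sub_le_integral_of_hasDeriv_right_of_le ht hcont hderiv φint hbound
      have hint : (∫ s in (0:ℝ)..t, C * h lam * (1 - lam) * f s) = C * h lam * (1 - lam) * I := by
        rw [hI, ← intervalIntegral.integral_const_mul]
      rw [hint, hy0, zero_add] at main
      linarith
    -- let ε → 0⁺
    have h1 : Tendsto (fun ε : ℝ => (y t + ε) ^ (1 - lam)) (nhdsWithin 0 (Ioi 0))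
        (nhds (y t ^ (1 - lam))) := by
      have : ContinuousAt (fun ε : ℝ => (y t + ε) ^ (1 - lam)) 0 := by
        apply ContinuousAt.rpow_const
        · exact (continuous_const.add continuous_id).continuousAt
        · exact Or.inr h1l.le
      simpa using this.continuousWithinAt.tendsto
    have h2 : Tendsto (fun ε : ℝ => ε ^ (1 - lam) + C * h lam * (1 - lam) * I)
        (nhdsWithin 0 (Ioi 0)) (nhds (0 + C * h lam * (1 - lam) * I)) := by
      apply Tendsto.add_const
      have : ContinuousAt (fun ε : ℝ => ε ^ (1 - lam)) 0 :=
        Real.continuousAt_rpow_const 0 _ (Or.inr h1l.le)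
      have := this.tendsto.mono_left (nhdsWithin_le_nhds (s := Ioi (0:ℝ)))
      simpa [Real.zero_rpow (ne_of_gt h1l)] using this
    rw [zero_add] at h2
    exact le_of_tendsto_of_tendsto h1 h2 (eventually_mem_nhdsWithin.mono fun ε hε => eps ε hε)
  -- let lam → 1⁻
  by_contra hne
  have hyt : 0 < y t := lt_of_le_of_ne (hy_nonneg t ht) (Ne.symm hne)
  have hL : Tendsto (fun lam : ℝ => y t ^ (1 - lam)) (nhdsWithin 1 (Iio 1)) (nhds 1) := by
    have hc : ContinuousAt (fun lam : ℝ => y t ^ (1 - lam)) 1 :=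
      (Real.continuousAt_const_rpow (ne_of_gt hyt)).comp
        ((continuous_const.sub continuous_id).continuousAt)
    have := hc.tendsto.mono_left (nhdsWithin_le_nhds (s := Iio (1:ℝ)))
    simpa [Real.rpow_zero] using this
  have hR : Tendsto (fun lam : ℝ => C * h lam * (1 - lam) * I) (nhdsWithin 1 (Iio 1))
      (nhds 0) := by
    have := (hh.const_mul C).mul_const I
    simp only [mul_zero, zero_mul] at this
    apply this.congr
    intro lam; ring
  have hone : (1:ℝ) ≤ 0 := by
    have : NeBot (nhdsWithin (1:ℝ) (Iio 1)) := nhdsLT_neBot 1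
    refine le_of_tendsto_of_tendsto hL hR ?_
    filter_upwards [self_mem_nhdsWithin,
      eventually_nhdsWithin_of_eventually_nhds (eventually_gt_nhds (by norm_num : (0:ℝ) < 1))]
      with lam h1 h2
    exact key lam ⟨h2, h1⟩
  linarith
end
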